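/- arXiv:1808.06320 — 2 statements merged into one kernel-verified Lean document; each statement's English description precedes it below -/
import Mathlib

section
/- Let d ≥ 1 and n ≥ 2. Mechanism 1, which on profile x = (x_1, …, x_n) outputs (1/4)δ_{x_1} + (1/4)δ_{x_2} + (1/2)δ_{(x_1+x_2)/2}, is a 2-approximation for maximum cost: for every profile x, E_{y∼f(x)} max_{i∈{1,…,n}} ‖y − x_i‖ ≤ 2 · inf_{y∈ℝ^d} max_{i∈{1,…,n}} ‖y − x_i‖. -/
open MeasureTheory ENNReal

noncomputable section

/-- Points in `d`-dimensional Euclidean space. -/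
abbrev Pt (d : ℕ) : Type := EuclideanSpace ℝ (Fin d)

/-- Mechanism 1 for `n ≥ 2` agents: output `x 1`'s and `x 2`'s locations w.p. 1/4 each,
and their midpoint w.p. 1/2. -/
def mech1 {d n : ℕ} (hn : 2 ≤ n) (x : Fin n → Pt d) : Measure (Pt d) :=
  (1/4 : ℝ≥0∞) • Measure.dirac (x ⟨0, by omega⟩) + (1/4 : ℝ≥0∞) • Measure.dirac (x ⟨1, by omega⟩)
    + (1/2 : ℝ≥0∞) • Measure.dirac ((2 : ℝ)⁻¹ • (x ⟨0, by omega⟩ + x ⟨1, by omega⟩))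

/-! Fix any `y` and let `R = max_i ‖y - x i‖`. Each location Mechanism 1 can output lies within
`R` of `y`: the two agents by definition of `R`, their midpoint by the triangle inequality. By the
triangle inequality again, the maximum cost at such a location is at most `2 R`; averaging and
taking the infimum over `y` gives the claim. -/

section MaxCost

variable {ι E : Type*} [NormedAddCommGroup E]

def maxCost (x : ι → E) (y : E) : ℝ := ⨆ i, ‖y - x i‖

variable [Finite ι]

theorem norm_sub_le_maxCost (x : ι → E) (y : E) (i : ι) : ‖y - x i‖ ≤ maxCost x y :=
  le_ciSup (f := fun i => ‖y - x i‖) (Set.finite_range _).bddAbove i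

theorem norm_midpoint_sub_le_maxCost [NormedSpace ℝ E] (x : ι → E) (y : E) (i j : ι) :
    ‖(2 : ℝ)⁻¹ • (x i + x j) - y‖ ≤ maxCost x y := by
  have hi := norm_sub_le_maxCost x y i
  have hj := norm_sub_le_maxCost x y j
  rw [norm_sub_rev] at hi hj
  calc ‖(2 : ℝ)⁻¹ • (x i + x j) - y‖ = (2 : ℝ)⁻¹ * ‖(x i - y) + (x j - y)‖ := by
        rw [← norm_smul_of_nonneg (by norm_num)]
        congr 1
        module
    _ ≤ (2 : ℝ)⁻¹ * (‖x i - y‖ + ‖x j - y‖) := by gcongr; exact norm_add_le _ _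
    _ ≤ maxCost x y := by linarith

variable [Nonempty ι]

theorem maxCost_le_norm_sub_add (x : ι → E) (c y : E) :
    maxCost x c ≤ ‖c - y‖ + maxCost x y :=
  ciSup_le fun i => (norm_sub_le_norm_sub_add_norm_sub c y (x i)).trans
    (add_le_add_right (norm_sub_le_maxCost x y i) _)

theorem maxCost_le_two_mul_of_norm_sub_le {x : ι → E} {c y : E}
    (h : ‖c - y‖ ≤ maxCost x y) : maxCost x c ≤ 2 * maxCost x y := by
  linarith [maxCost_le_norm_sub_add x c y]

theorem maxCost_apply_le_two_mul (x : ι → E) (i : ι) (y : E) :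
    maxCost x (x i) ≤ 2 * maxCost x y :=
  maxCost_le_two_mul_of_norm_sub_le ((norm_sub_rev _ _).trans_le (norm_sub_le_maxCost x y i))

end MaxCost

theorem integral_smul_dirac {α : Type*} [MeasurableSpace α] [MeasurableSingletonClass α]
    (c : ℝ≥0∞) (f : α → ℝ) (a : α) : ∫ y, f y ∂(c • Measure.dirac a) = c.toReal * f a := by
  rw [integral_smul_measure, integral_dirac, smul_eq_mul]

theorem integrable_smul_dirac {α : Type*} [MeasurableSpace α] [MeasurableSingletonClass α]
    {c : ℝ≥0∞} (hc : c ≠ ∞) (f : α → ℝ) (a : α) : Integrable f (c • Measure.dirac a) :=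
  (integrable_dirac enorm_lt_top).smul_measure hc

theorem integral_mech1 {d n : ℕ} (hn : 2 ≤ n) (x : Fin n → Pt d) (f : Pt d → ℝ) :
    ∫ y, f y ∂(mech1 hn x) = 4⁻¹ * f (x ⟨0, by omega⟩) + 4⁻¹ * f (x ⟨1, by omega⟩)
      + 2⁻¹ * f ((2 : ℝ)⁻¹ • (x ⟨0, by omega⟩ + x ⟨1, by omega⟩)) := by
  have h4 : (1 / 4 : ℝ≥0∞) ≠ ∞ := by norm_num
  have h2 : (1 / 2 : ℝ≥0∞) ≠ ∞ := by norm_num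
  rw [mech1, integral_add_measure, integral_add_measure]
  · simp only [integral_smul_dirac, one_div, ENNReal.toReal_inv, ENNReal.toReal_ofNat]
  · exact integrable_smul_dirac h4 f _
  · exact integrable_smul_dirac h4 f _
  · exact (integrable_smul_dirac h4 f _).add_measure (integrable_smul_dirac h4 f _)
  · exact integrable_smul_dirac h2 f _

theorem mech1_maxCost_two_approx_general {d n : ℕ} (hn : 2 ≤ n) (x : Fin n → Pt d) :
    ∫ y, ⨆ i : Fin n, ‖y - x i‖ ∂(mech1 hn x)
      ≤ (2 : ℝ) * ⨅ y : Pt d, ⨆ i : Fin n, ‖y - x i‖ := by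
  have : Nonempty (Fin n) := ⟨⟨0, by omega⟩⟩
  change ∫ y, maxCost x y ∂(mech1 hn x) ≤ 2 * ⨅ y, maxCost x y
  rw [integral_mech1, Real.mul_iInf_of_nonneg zero_le_two]
  refine le_ciInf fun y => ?_
  have ha := maxCost_apply_le_two_mul x ⟨0, by omega⟩ y
  have hb := maxCost_apply_le_two_mul x ⟨1, by omega⟩ y
  have hm := maxCost_le_two_mul_of_norm_sub_le
    (norm_midpoint_sub_le_maxCost x y ⟨0, by omega⟩ ⟨1, by omega⟩)
  linarith

/-- For `d ≥ 1` and `n ≥ 2`, Mechanism 1 is a 2-approximation for maximum cost. -/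
theorem mech1_maxCost_two_approx {d n : ℕ} (hd : 1 ≤ d) (hn : 2 ≤ n) (x : Fin n → Pt d) :
    ∫ y, ⨆ i : Fin n, ‖y - x i‖ ∂(mech1 hn x)
      ≤ (2 : ℝ) * ⨅ y : Pt d, ⨆ i : Fin n, ‖y - x i‖ :=
  mech1_maxCost_two_approx_general hn x
end
end

section
/- Let d ≥ 1 and n ≥ 2. Mechanism 1, which on profile x = (x_1, …, x_n) outputs (1/4)δ_{x_1} + (1/4)δ_{x_2} + (1/2)δ_{(x_1+x_2)/2}, is an (n/2)-approximation for social cost: for every profile x, E_{y∼f(x)} Σ_{i=1}^{n} ‖y − x_i‖ ≤ (n/2) · inf_{y∈ℝ^d} Σ_{i=1}^{n} ‖y − x_i‖. -/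
open MeasureTheory ENNReal

noncomputable section

/-- For `d ≥ 1` and `n ≥ 2`, Mechanism 1 is an (n/2)-approximation for social cost. -/
theorem mech1_socialCost_half_n_approx {d n : ℕ} (hd : 1 ≤ d) (hn : 2 ≤ n) (x : Fin n → Pt d) :
    ∫ y, ∑ i : Fin n, ‖y - x i‖ ∂(mech1 hn x)
      ≤ ((n : ℝ) / 2) * ⨅ y : Pt d, ∑ i : Fin n, ‖y - x i‖ := by
  have hn' : (2:ℝ) ≤ (n:ℝ) := by exact_mod_cast hn
  set i0 : Fin n := ⟨0, by omega⟩ with hi0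
  set i1 : Fin n := ⟨1, by omega⟩ with hi1
  have hne : i0 ≠ i1 := by simp [hi0, hi1, Fin.ext_iff]
  set a : Pt d := x i0 with ha
  set b : Pt d := x i1 with hb
  set m : Pt d := (2:ℝ)⁻¹ • (a + b) with hm
  set g : Pt d → ℝ := fun y => ∑ i : Fin n, ‖y - x i‖ with hg
  have hgc : Continuous g := by
    apply continuous_finset_sum
    intro i _
    exact (continuous_id.sub continuous_const).norm
  have hdir : ∀ p : Pt d, Integrable g (Measure.dirac p) := by
    intro p
    refine ⟨hgc.aestronglyMeasurable, ?_⟩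
    rw [HasFiniteIntegral, lintegral_dirac]
    exact ENNReal.coe_lt_top
  have hI : ∫ y, g y ∂(mech1 hn x)
      = (1/4) * g a + (1/4) * g b + (1/2) * g m := by
    have h1 : mech1 hn x = (1/4 : ℝ≥0∞) • Measure.dirac a + (1/4 : ℝ≥0∞) • Measure.dirac b
        + (1/2 : ℝ≥0∞) • Measure.dirac m := rfl
    rw [h1, integral_add_measure, integral_add_measure, integral_smul_measure,
      integral_smul_measure, integral_smul_measure, integral_dirac, integral_dirac, integral_dirac]
    · simp only [smul_eq_mul]
      norm_num
    · exact (hdir a).smul_measure (by norm_num)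
    · exact (hdir b).smul_measure (by norm_num)
    · exact (((hdir a).smul_measure (by norm_num)).add_measure ((hdir b).smul_measure (by norm_num)))
    · exact (hdir m).smul_measure (by norm_num)
  have key : ∀ y : Pt d, (1/4) * g a + (1/4) * g b + (1/2) * g m ≤ ((n:ℝ)/2) * g y := by
    intro y
    -- g m ≤ (1/2) * (g a + g b)
    have hmle : g m ≤ (1/2) * (g a + g b) := by
      rw [hg]
      simp only
      rw [← Finset.sum_add_distrib, Finset.mul_sum]
      apply Finset.sum_le_sum
      intro i _
      have heq : m - x i = (2:ℝ)⁻¹ • ((a - x i) + (b - x i)) := by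
        rw [hm]; module
      rw [heq, norm_smul]
      have := norm_add_le (a - x i) (b - x i)
      simp only [norm_inv, Real.norm_ofNat]
      nlinarith [norm_nonneg (a - x i + (b - x i))]
    have hT : ‖y - a‖ + ‖y - b‖ ≤ g y := by
      have hsub : ({i0, i1} : Finset (Fin n)).sum (fun i => ‖y - x i‖)
          ≤ Finset.univ.sum (fun i => ‖y - x i‖) :=
        Finset.sum_le_sum_of_subset_of_nonneg (Finset.subset_univ _)
          (fun i _ _ => norm_nonneg _)
      rwa [Finset.sum_pair hne] at hsub
    have hAB : g a + g b ≤ (n:ℝ) * g y := by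
      have per : ∀ i : Fin n, ‖a - x i‖ + ‖b - x i‖
          ≤ (‖y - a‖ + ‖y - b‖) + 2 * ‖y - x i‖
            - 2 * ((if i = i0 then ‖y - a‖ else 0) + (if i = i1 then ‖y - b‖ else 0)) := by
        intro i
        have t1 : ‖a - x i‖ ≤ ‖y - a‖ + ‖y - x i‖ := by
          have := norm_sub_le (y - x i) (y - a)
          have he : (y - x i) - (y - a) = a - x i := by module
          rw [he] at this; linarith
        have t2 : ‖b - x i‖ ≤ ‖y - b‖ + ‖y - x i‖ := by
          have := norm_sub_le (y - x i) (y - b)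
          have he : (y - x i) - (y - b) = b - x i := by module
          rw [he] at this; linarith
        by_cases h0 : i = i0
        · subst h0
          rw [if_pos rfl, if_neg hne, ← ha]
          have hba : ‖b - a‖ ≤ ‖y - a‖ + ‖y - b‖ := by
            have := norm_sub_le (y - a) (y - b)
            have he : (y - a) - (y - b) = b - a := by module
            rw [he] at this; linarith
          simp only [sub_self, norm_zero]
          have hya : ‖y - a‖ = ‖y - x i0‖ := by rw [← ha]
          rw [← hya]
          linarith
        · by_cases h1 : i = i1
          · subst h1
            rw [if_neg (by exact fun h => h0 h), if_pos rfl, ← hb]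
            have hab : ‖a - b‖ ≤ ‖y - a‖ + ‖y - b‖ := by
              have := norm_sub_le (y - b) (y - a)
              have he : (y - b) - (y - a) = a - b := by module
              rw [he] at this; linarith
            simp only [sub_self, norm_zero]
            have hyb : ‖y - b‖ = ‖y - x i1‖ := by rw [← hb]
            rw [← hyb]
            linarith
          · rw [if_neg h0, if_neg h1]
            linarith
      have hsum := Finset.sum_le_sum (s := (Finset.univ : Finset (Fin n))) (fun i _ => per i)
      have e1 : ∑ i : Fin n, (‖y - a‖ + ‖y - b‖ + 2 * ‖y - x i‖)
          = (n:ℝ) * (‖y - a‖ + ‖y - b‖) + 2 * ∑ i : Fin n, ‖y - x i‖ := by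
        rw [Finset.sum_add_distrib, Finset.sum_const, Finset.card_univ, Fintype.card_fin,
          ← Finset.mul_sum, nsmul_eq_mul]
      have e2 : ∑ i : Fin n, 2 * ((if i = i0 then ‖y - a‖ else 0) + if i = i1 then ‖y - b‖ else 0)
          = 2 * (‖y - a‖ + ‖y - b‖) := by
        rw [← Finset.mul_sum, Finset.sum_add_distrib, Finset.sum_ite_eq', Finset.sum_ite_eq']
        simp
      rw [Finset.sum_sub_distrib, e1, e2, Finset.sum_add_distrib] at hsum
      have hga : g a = ∑ i : Fin n, ‖a - x i‖ := rfl
      have hgb : g b = ∑ i : Fin n, ‖b - x i‖ := rfl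
      have hgy : g y = ∑ i : Fin n, ‖y - x i‖ := rfl
      rw [hga, hgb, hgy]
      rw [hgy] at hT
      nlinarith [hT, hsum]
    linarith
  rw [hI]
  have hnpos : (0:ℝ) < (n:ℝ) := by linarith
  set c := ⨅ y : Pt d, g y with hc
  have h1 : (2/(n:ℝ)) * ((1/4) * g a + (1/4) * g b + (1/2) * g m) ≤ c := by
    apply le_ciInf
    intro y
    have hk := key y
    calc (2/(n:ℝ)) * ((1/4) * g a + (1/4) * g b + (1/2) * g m)
        ≤ (2/(n:ℝ)) * (((n:ℝ)/2) * g y) := by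
          apply mul_le_mul_of_nonneg_left hk (by positivity)
      _ = g y := by field_simp
  calc (1/4) * g a + (1/4) * g b + (1/2) * g m
      = ((n:ℝ)/2) * ((2/(n:ℝ)) * ((1/4) * g a + (1/4) * g b + (1/2) * g m)) := by
        field_simp
    _ ≤ ((n:ℝ)/2) * c := mul_le_mul_of_nonneg_left h1 (by positivity)
end
end
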